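/- Let M, N, t be positive integers with 1 ≤ t ≤ N, and let η > 0 satisfy η²·t = 32·log(8N²M). Let B* = {0, 1/(MN), 2/(MN), …, (N−1)/(MN)}. Then there exists a set B ⊆ {0, 1, …, N−1} with |B| = t such that for every x ∈ {0, 1, …, N−1} and every integer k with 0 ≤ k < MN, |S_{B(x)}(k)/t − S_{B*}(k)/N| ≤ η, where B(x) = { ((x+y) mod N)/(MN) : y ∈ B }. -/

import Mathlib

/-!
Keep each element of `{0, …, N-1}` independently with probability `p = t/N`. For fixed `x` and
`k`, the sum over the random set minus `p` times the full sum is a sum of independent centred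
terms of modulus at most `1` and variance at most `p`, so a Chernoff bound with exponent
`-θσ + Npθ² = -θσ + tθ²` makes it exceed `√2 σ` with probability at most `4 e^{-θσ + tθ²}`
(Hoeffding's bound `e^{-2σ²/N}` would be too weak when `t ≪ N`); the same holds for the size of
the random set, with `2` in place of `4`. With `θ = η/5` and `σ = 2ηt/5` the exponent is
`-η²t/25 ≤ -log (8N²M)`, so a union bound over the `N · MN` pairs `(x, k)` leaves a good
outcome `T`. Adding or removing fewer than `σ` elements turns `T` into a set of size exactly `t`,
and `(1 + √2) · 2/5 < 1` absorbs both errors. For `η > 2` any `t`-set works, since each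
normalised sum has modulus at most `1`.
-/

open Complex Real Finset

/-- The exponential sum `S_E(k) = ∑_{e ∈ E} e^{-2πike}` of a finite set `E ⊆ ℝ`. -/
noncomputable def expSum (E : Finset ℝ) (k : ℤ) : ℂ :=
  ∑ e ∈ E, Complex.exp (-(2 * Real.pi * Complex.I * k * e))

lemma bernoulli_mgf_le {p θ x : ℝ} (hp0 : 0 ≤ p) (hθ0 : 0 ≤ θ) (hθ1 : θ ≤ 1) (hx : |x| ≤ 1) :
    p * Real.exp (θ * (1 - p) * x) + (1 - p) * Real.exp (-(θ * p * x)) ≤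
      Real.exp (p * θ ^ 2) := by
  have hθx : |θ * x| ≤ 1 := by
    rw [abs_mul, abs_of_nonneg hθ0]
    nlinarith [abs_nonneg x]
  have hquad : Real.exp (θ * x) - 1 - θ * x ≤ θ ^ 2 := by
    have hx2 : x ^ 2 ≤ 1 := (sq_le_one_iff_abs_le_one x).mpr hx
    have := (abs_le.mp (Real.abs_exp_sub_one_sub_id_le hθx)).2
    nlinarith [mul_le_mul_of_nonneg_left hx2 (sq_nonneg θ)]
  calc p * Real.exp (θ * (1 - p) * x) + (1 - p) * Real.exp (-(θ * p * x))
      = Real.exp (-(θ * p * x)) * (1 + p * (Real.exp (θ * x) - 1)) := by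
        rw [show θ * (1 - p) * x = θ * x + -(θ * p * x) by ring, Real.exp_add]
        ring
    _ ≤ Real.exp (-(θ * p * x)) * Real.exp (p * (Real.exp (θ * x) - 1)) := by
        gcongr
        linarith [Real.add_one_le_exp (p * (Real.exp (θ * x) - 1))]
    _ = Real.exp (p * (Real.exp (θ * x) - 1 - θ * x)) := by rw [← Real.exp_add]; ring_nf
    _ ≤ Real.exp (p * θ ^ 2) := by gcongr

section Bernoulli

variable {ι : Type*} [DecidableEq ι] {p : ℝ} {s : Finset ι}

/-- The probability of the outcome `T ⊆ s` when each element of `s` is kept independently with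
probability `p`. -/
def bernoulliWeight (p : ℝ) (s T : Finset ι) : ℝ := (∏ _i ∈ T, p) * ∏ _i ∈ s \ T, (1 - p)

def bernoulliProb (p : ℝ) (s : Finset ι) (E : Finset ι → Prop) [DecidablePred E] : ℝ :=
  ∑ T ∈ s.powerset with E T, bernoulliWeight p s T

lemma bernoulliWeight_nonneg (hp0 : 0 ≤ p) (hp1 : p ≤ 1) (T : Finset ι) :
    0 ≤ bernoulliWeight p s T :=
  mul_nonneg (prod_nonneg fun _ _ => hp0) (prod_nonneg fun _ _ => sub_nonneg.mpr hp1)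

lemma sum_bernoulliWeight (p : ℝ) (s : Finset ι) :
    ∑ T ∈ s.powerset, bernoulliWeight p s T = 1 := by
  simp only [bernoulliWeight]
  rw [← prod_add]
  simp

lemma exists_not_of_bernoulliProb_lt_one {E : Finset ι → Prop} [DecidablePred E]
    (h : bernoulliProb p s E < 1) : ∃ T ⊆ s, ¬ E T := by
  by_contra! hE
  rw [bernoulliProb, filter_true_of_mem fun T hT => hE T (mem_powerset.mp hT),
    sum_bernoulliWeight] at h
  exact h.false

lemma bernoulliProb_mono (hp0 : 0 ≤ p) (hp1 : p ≤ 1) {E F : Finset ι → Prop} [DecidablePred E]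
    [DecidablePred F] (h : ∀ T ⊆ s, E T → F T) : bernoulliProb p s E ≤ bernoulliProb p s F :=
  sum_le_sum_of_subset_of_nonneg (monotone_filter_right _ fun T hT => h T (mem_powerset.mp hT))
    fun T _ _ => bernoulliWeight_nonneg hp0 hp1 T

lemma bernoulliProb_or_le (hp0 : 0 ≤ p) (hp1 : p ≤ 1) (E F : Finset ι → Prop) [DecidablePred E]
    [DecidablePred F] :
    bernoulliProb p s (fun T => E T ∨ F T) ≤ bernoulliProb p s E + bernoulliProb p s F := by
  simp only [bernoulliProb, sum_filter, ← sum_add_distrib]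
  refine sum_le_sum fun T _ => ?_
  have := bernoulliWeight_nonneg hp0 hp1 (s := s) T
  split_ifs <;> simp_all

lemma bernoulliProb_exists_le (hp0 : 0 ≤ p) (hp1 : p ≤ 1) {κ : Type*} (J : Finset κ)
    (E : κ → Finset ι → Prop) [∀ j, DecidablePred (E j)] :
    bernoulliProb p s (fun T => ∃ j ∈ J, E j T) ≤ ∑ j ∈ J, bernoulliProb p s (E j) := by
  simp only [bernoulliProb, sum_filter]
  rw [sum_comm]
  refine sum_le_sum fun T _ => ?_
  have hw := bernoulliWeight_nonneg hp0 hp1 (s := s) T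
  split_ifs with hT
  · obtain ⟨j, hj, hEj⟩ := hT
    calc bernoulliWeight p s T = if E j T then bernoulliWeight p s T else 0 := by rw [if_pos hEj]
      _ ≤ _ := single_le_sum (f := fun j => if E j T then bernoulliWeight p s T else 0)
          (fun j _ => by split_ifs <;> simp [hw]) hj
  · exact sum_nonneg fun j _ => by split_ifs <;> simp [hw]

lemma sum_bernoulliWeight_mul_exp (p θ : ℝ) (s : Finset ι) (a : ι → ℝ) :
    ∑ T ∈ s.powerset, bernoulliWeight p s T *
        Real.exp (θ * (∑ i ∈ T, a i - p * ∑ i ∈ s, a i)) =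
      ∏ i ∈ s, (p * Real.exp (θ * (1 - p) * a i) + (1 - p) * Real.exp (-(θ * p * a i))) := by
  rw [prod_add]
  refine sum_congr rfl fun T hT => ?_
  have hsplit : θ * (∑ i ∈ T, a i - p * ∑ i ∈ s, a i) =
      ∑ i ∈ T, θ * (1 - p) * a i + ∑ i ∈ s \ T, -(θ * p * a i) := by
    rw [← sum_sdiff (mem_powerset.mp hT), sum_neg_distrib, ← mul_sum, ← mul_sum]
    ring
  rw [hsplit, Real.exp_add, Real.exp_sum, Real.exp_sum, bernoulliWeight, prod_mul_distrib,
    prod_mul_distrib]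
  ring

theorem bernoulliProb_le_exp (hp0 : 0 ≤ p) (hp1 : p ≤ 1) {a : ι → ℝ} (ha : ∀ i, |a i| ≤ 1)
    {θ : ℝ} (hθ0 : 0 ≤ θ) (hθ1 : θ ≤ 1) (σ : ℝ) :
    bernoulliProb p s (fun T => σ ≤ ∑ i ∈ T, a i - p * ∑ i ∈ s, a i) ≤
      Real.exp (-(θ * σ) + #s * p * θ ^ 2) := by
  set D : Finset ι → ℝ := fun T => ∑ i ∈ T, a i - p * ∑ i ∈ s, a i
  calc bernoulliProb p s (fun T => σ ≤ D T)
      ≤ ∑ T ∈ s.powerset, bernoulliWeight p s T * Real.exp (θ * (D T - σ)) := by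
        rw [bernoulliProb, sum_filter]
        refine sum_le_sum fun T _ => ?_
        have hw := bernoulliWeight_nonneg hp0 hp1 (s := s) T
        split_ifs with hT
        · exact le_mul_of_one_le_right hw (Real.one_le_exp (by nlinarith))
        · positivity
    _ = Real.exp (-(θ * σ)) *
          ∑ T ∈ s.powerset, bernoulliWeight p s T * Real.exp (θ * D T) := by
        rw [mul_sum]
        refine sum_congr rfl fun T _ => ?_
        rw [show θ * (D T - σ) = -(θ * σ) + θ * D T by ring, Real.exp_add]
        ring
    _ ≤ Real.exp (-(θ * σ)) * ∏ _i ∈ s, Real.exp (p * θ ^ 2) := by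
        rw [sum_bernoulliWeight_mul_exp]
        gcongr with i
        exact bernoulli_mgf_le hp0 hθ0 hθ1 (ha i)
    _ = Real.exp (-(θ * σ) + #s * p * θ ^ 2) := by
        rw [prod_const, ← Real.exp_nat_mul, ← Real.exp_add]
        ring_nf

lemma bernoulliProb_abs_le_exp (hp0 : 0 ≤ p) (hp1 : p ≤ 1) {a : ι → ℝ} (ha : ∀ i, |a i| ≤ 1)
    {θ : ℝ} (hθ0 : 0 ≤ θ) (hθ1 : θ ≤ 1) (σ : ℝ) :
    bernoulliProb p s (fun T => σ ≤ |∑ i ∈ T, a i - p * ∑ i ∈ s, a i|) ≤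
      2 * Real.exp (-(θ * σ) + #s * p * θ ^ 2) := by
  have hpos := bernoulliProb_le_exp (s := s) hp0 hp1 ha hθ0 hθ1 σ
  have hneg := bernoulliProb_le_exp (s := s) hp0 hp1 (a := fun i => -a i)
    (fun i => (abs_neg (a i)).trans_le (ha i)) hθ0 hθ1 σ
  calc _ ≤ bernoulliProb p s (fun T => σ ≤ ∑ i ∈ T, a i - p * ∑ i ∈ s, a i ∨
          σ ≤ ∑ i ∈ T, -a i - p * ∑ i ∈ s, -a i) := by
        refine bernoulliProb_mono hp0 hp1 fun T _ h => ?_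
        simp only [sum_neg_distrib]
        rcases le_abs.mp h with h | h
        · exact Or.inl h
        · exact Or.inr (by linarith)
    _ ≤ _ := (bernoulliProb_or_le hp0 hp1 _ _).trans (by linarith)

lemma bernoulliProb_norm_le_exp (hp0 : 0 ≤ p) (hp1 : p ≤ 1) {g : ι → ℂ} (hg : ∀ i, ‖g i‖ ≤ 1)
    {θ : ℝ} (hθ0 : 0 ≤ θ) (hθ1 : θ ≤ 1) (σ : ℝ) :
    bernoulliProb p s (fun T => √2 * σ < ‖∑ i ∈ T, g i - p * ∑ i ∈ s, g i‖) ≤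
      4 * Real.exp (-(θ * σ) + #s * p * θ ^ 2) := by
  have hre := bernoulliProb_abs_le_exp (s := s) hp0 hp1 (a := fun i => (g i).re)
    (fun i => (abs_re_le_norm _).trans (hg i)) hθ0 hθ1 σ
  have him := bernoulliProb_abs_le_exp (s := s) hp0 hp1 (a := fun i => (g i).im)
    (fun i => (abs_im_le_norm _).trans (hg i)) hθ0 hθ1 σ
  calc _ ≤ bernoulliProb p s (fun T => σ ≤ |∑ i ∈ T, (g i).re - p * ∑ i ∈ s, (g i).re| ∨
          σ ≤ |∑ i ∈ T, (g i).im - p * ∑ i ∈ s, (g i).im|) := by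
        refine bernoulliProb_mono hp0 hp1 fun T _ h => ?_
        have hmax := (h.trans_le (norm_le_sqrt_two_mul_max _)).le
        rw [mul_le_mul_iff_right₀ (by positivity), le_max_iff] at hmax
        simpa [re_sum, im_sum] using hmax
    _ ≤ _ := (bernoulliProb_or_le hp0 hp1 _ _).trans (by linarith)

theorem exists_subset_forall_norm_sum_sub_le (hp0 : 0 ≤ p) (hp1 : p ≤ 1) {κ : Type*}
    (J : Finset κ) {g : κ → ι → ℂ} (hg : ∀ j i, ‖g j i‖ ≤ 1) {θ σ : ℝ} (hθ0 : 0 ≤ θ)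
    (hθ1 : θ ≤ 1) (hbudget : (4 * #J + 2) * Real.exp (-(θ * σ) + #s * p * θ ^ 2) < 1) :
    ∃ T ⊆ s, |(#T : ℝ) - p * #s| < σ ∧
      ∀ j ∈ J, ‖∑ i ∈ T, g j i - p * ∑ i ∈ s, g j i‖ ≤ √2 * σ := by
  have hcard := bernoulliProb_abs_le_exp (s := s) hp0 hp1 (a := fun _ => 1) (by simp) hθ0 hθ1 σ
  have hunion := bernoulliProb_exists_le (s := s) hp0 hp1 J
    (fun j T => √2 * σ < ‖∑ i ∈ T, g j i - p * ∑ i ∈ s, g j i‖)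
  have hsum := sum_le_card_nsmul J _ _ fun j _ =>
    bernoulliProb_norm_le_exp (s := s) hp0 hp1 (hg j) hθ0 hθ1 σ
  rw [nsmul_eq_mul] at hsum
  obtain ⟨T, hTs, hT⟩ := exists_not_of_bernoulliProb_lt_one (p := p) (s := s)
    (E := fun T => σ ≤ |∑ i ∈ T, (1 : ℝ) - p * ∑ i ∈ s, 1| ∨
      ∃ j ∈ J, √2 * σ < ‖∑ i ∈ T, g j i - p * ∑ i ∈ s, g j i‖)
    ((bernoulliProb_or_le hp0 hp1 _ _).trans_lt (by linarith))
  push Not at hT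
  exact ⟨T, hTs, by simpa using hT.1, hT.2⟩

end Bernoulli

lemma norm_sum_le_card {ι E : Type*} [SeminormedAddCommGroup E] {g : ι → E}
    (hg : ∀ i, ‖g i‖ ≤ 1) (A : Finset ι) : ‖∑ i ∈ A, g i‖ ≤ #A := by
  simpa using norm_sum_le_of_le A fun i _ => hg i

lemma exists_card_eq_and_subset_or_superset {ι : Type*} {s T : Finset ι} (hT : T ⊆ s) {t : ℕ}
    (ht : t ≤ #s) : ∃ B ⊆ s, #B = t ∧ (B ⊆ T ∨ T ⊆ B) := by
  rcases le_total t #T with htT | hTt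
  · obtain ⟨B, hBT, hB⟩ := exists_subset_card_eq htT
    exact ⟨B, hBT.trans hT, hB, Or.inl hBT⟩
  · obtain ⟨B, hTB, hBs, hB⟩ := exists_subsuperset_card_eq hT hTt ht
    exact ⟨B, hBs, hB, Or.inr hTB⟩

lemma norm_sum_sub_sum_le_of_subset {ι : Type*} [DecidableEq ι] {E : Type*}
    [SeminormedAddCommGroup E] {g : ι → E} (hg : ∀ i, ‖g i‖ ≤ 1) {A B : Finset ι} (h : A ⊆ B) :
    ‖∑ i ∈ B, g i - ∑ i ∈ A, g i‖ ≤ #B - #A := by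
  rw [← sum_sdiff_eq_sub h, ← Nat.cast_sub (card_le_card h), ← card_sdiff_of_subset h]
  exact norm_sum_le_card hg _

lemma norm_sum_sub_sum_le_of_subset_or_superset {ι : Type*} [DecidableEq ι] {E : Type*}
    [SeminormedAddCommGroup E] {g : ι → E} (hg : ∀ i, ‖g i‖ ≤ 1) {A B : Finset ι}
    (h : A ⊆ B ∨ B ⊆ A) :
    ‖∑ i ∈ A, g i - ∑ i ∈ B, g i‖ ≤ |(#A : ℝ) - #B| := by
  rcases h with h | h
  · rw [norm_sub_rev, abs_sub_comm]
    exact (norm_sum_sub_sum_le_of_subset hg h).trans (le_abs_self _)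
  · exact (norm_sum_sub_sum_le_of_subset hg h).trans (le_abs_self _)

lemma norm_exp_neg_two_pi_I_mul (k : ℤ) (r : ℝ) :
    ‖Complex.exp (-(2 * π * I * k * r))‖ = 1 := by
  simp [Complex.norm_exp]

lemma norm_expSum_le_card (E : Finset ℝ) (k : ℤ) : ‖expSum E k‖ ≤ #E :=
  norm_sum_le_card (fun r => (norm_exp_neg_two_pi_I_mul k r).le) E

lemma norm_expSum_div_sub_expSum_div_le_two {E F : Finset ℝ} {t N : ℕ} (hE : #E ≤ t)
    (hF : #F ≤ N) (ht : 0 < t) (hN : 0 < N) (k : ℤ) :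
    ‖expSum E k / t - expSum F k / N‖ ≤ 2 := by
  have hdiv {A : Finset ℝ} {n : ℕ} (hA : #A ≤ n) (hn : 0 < n) : ‖expSum A k / n‖ ≤ 1 := by
    rw [norm_div, Complex.norm_natCast, div_le_one (by positivity)]
    exact (norm_expSum_le_card A k).trans (by exact_mod_cast hA)
  linarith [norm_sub_le (expSum E k / t) (expSum F k / N), hdiv hE ht, hdiv hF hN]

lemma injOn_add_mod (N x : ℕ) : Set.InjOn (fun y => (x + y) % N) (range N) := by
  intro i hi j hj h
  have hij : i % N = j % N := Nat.ModEq.add_left_cancel' x h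
  rwa [Nat.mod_eq_of_lt (mem_range.mp hi), Nat.mod_eq_of_lt (mem_range.mp hj)] at hij

lemma sum_range_add_mod {β : Type*} [AddCommMonoid β] (N x : ℕ) (f : ℕ → β) :
    ∑ y ∈ range N, f ((x + y) % N) = ∑ y ∈ range N, f y := by
  have hmaps : Set.MapsTo (fun y => (x + y) % N) (range N) (range N) := fun y hy =>
    mem_range.mpr (Nat.mod_lt _ (Nat.zero_lt_of_lt (mem_range.mp hy)))
  exact sum_nbij _ hmaps (injOn_add_mod N x)
    (surjOn_of_injOn_of_card_le _ hmaps (injOn_add_mod N x) le_rfl) fun _ _ => rfl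

lemma expSum_image {α : Type*} [DecidableEq α] {A : Finset α} {f : α → ℝ}
    (hf : Set.InjOn f A) (k : ℤ) :
    expSum (A.image f) k = ∑ a ∈ A, Complex.exp (-(2 * π * I * k * f a)) :=
  sum_image hf

noncomputable def gridPhase (M N k i : ℕ) : ℂ :=
  Complex.exp (-(2 * π * I * ((k : ℤ) : ℂ) * (((i : ℝ) / (M * N) : ℝ) : ℂ)))

lemma norm_gridPhase (M N k i : ℕ) : ‖gridPhase M N k i‖ = 1 :=
  norm_exp_neg_two_pi_I_mul _ _

lemma expSum_image_translate {M N : ℕ} (hM : 0 < M) (hN : 0 < N) {B : Finset ℕ}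
    (hB : B ⊆ range N) (x k : ℕ) :
    expSum (B.image fun y : ℕ => (((x + y) % N : ℕ) : ℝ) / (M * N)) k =
      ∑ y ∈ B, gridPhase M N k ((x + y) % N) := by
  have hMN : (M : ℝ) * N ≠ 0 := by positivity
  refine expSum_image (fun i hi j hj h => injOn_add_mod N x (hB hi) (hB hj) ?_) k
  simpa [div_left_inj' hMN] using h

lemma expSum_range_image {M N : ℕ} (hM : 0 < M) (hN : 0 < N) (x k : ℕ) :
    expSum ((range N).image fun i : ℕ => (i : ℝ) / (M * N)) k =
      ∑ y ∈ range N, gridPhase M N k ((x + y) % N) := by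
  have hMN : (M : ℝ) * N ≠ 0 := by positivity
  rw [sum_range_add_mod N x (gridPhase M N k)]
  exact expSum_image (fun i _ j _ h => by simpa [div_left_inj' hMN] using h) k

lemma norm_div_sub_div_le (a b c : ℂ) {t N : ℕ} (ht : 0 < t) (hN : 0 < N) :
    ‖a / t - c / N‖ ≤ (‖a - b‖ + ‖b - ((t / N : ℝ) : ℂ) * c‖) / t := by
  have ht' : (t : ℂ) ≠ 0 := by exact_mod_cast ht.ne'
  have hN' : (N : ℂ) ≠ 0 := by exact_mod_cast hN.ne'
  have hsplit : a / t - c / N = ((a - b) + (b - ((t / N : ℝ) : ℂ) * c)) / t := by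
    push_cast
    field_simp
    ring
  rw [hsplit, norm_div, Complex.norm_natCast]
  gcongr
  exact norm_add_le _ _

lemma failure_budget_lt_one {M N t : ℕ} {η : ℝ} (hM : 0 < M) (hN : 0 < N)
    (hηt : η ^ 2 * t = 32 * Real.log (8 * N ^ 2 * M)) :
    (4 * #(range N ×ˢ range (M * N)) + 2) *
      Real.exp (-(η / 5 * (2 / 5 * η * t)) + #(range N) * (t / N : ℝ) * (η / 5) ^ 2) < 1 := by
  have hN' : (N : ℝ) ≠ 0 := by positivity
  have hpos : (0 : ℝ) < 8 * N ^ 2 * M := by positivity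
  have hlog : 0 ≤ Real.log (8 * N ^ 2 * M) := by
    nlinarith [sq_nonneg η, (Nat.cast_nonneg t : (0 : ℝ) ≤ t)]
  have hexp : Real.exp (-(η / 5 * (2 / 5 * η * t)) + #(range N) * (t / N : ℝ) * (η / 5) ^ 2) ≤
      (8 * (N : ℝ) ^ 2 * M)⁻¹ := by
    rw [← Real.exp_log hpos, ← Real.exp_neg]
    gcongr
    rw [card_range, mul_div_cancel₀ _ hN']
    nlinarith
  have hNM : (1 : ℝ) ≤ N ^ 2 * M := by
    have : 1 ≤ N ^ 2 * M := Nat.one_le_iff_ne_zero.mpr (by positivity)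
    exact_mod_cast this
  calc _ ≤ (4 * (#(range N ×ˢ range (M * N)) : ℝ) + 2) * (8 * (N : ℝ) ^ 2 * M)⁻¹ := by
        gcongr
    _ < 1 := by
      rw [card_product, card_range, card_range, ← div_eq_mul_inv, div_lt_one hpos]
      push_cast
      nlinarith

/-- Lemma 5.2 (Łaba–Pramanik, Lemma 6.2): there is a `t`-element set `B` such that
all translates `B(x)` have exponential sums uniformly `η`-close to that of `B*`. -/
theorem good_translate_set_exists (M N t : ℕ) (η : ℝ)
    (hM : 0 < M) (hN : 0 < N) (ht₁ : 1 ≤ t) (ht₂ : t ≤ N) (hη : 0 < η)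
    (hηt : η ^ 2 * t = 32 * Real.log (8 * N ^ 2 * M)) :
    ∃ B : Finset ℕ, B ⊆ Finset.range N ∧ B.card = t ∧
      ∀ x ∈ Finset.range N, ∀ k : ℕ, k < M * N →
        ‖(expSum (B.image (fun y : ℕ => (((x + y) % N : ℕ) : ℝ) / (M * N))) k / t -
             expSum ((Finset.range N).image (fun i : ℕ => (i : ℝ) / (M * N))) k / N)‖ ≤
          η := by
  rcases lt_or_ge 2 η with hη2 | hη2
  · exact ⟨range t, range_subset_range.mpr ht₂, card_range t, fun x _ k _ =>
      (norm_expSum_div_sub_expSum_div_le_two (card_image_le.trans (card_range t).le)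
        (card_image_le.trans (card_range N).le) ht₁ hN k).trans hη2.le⟩
  obtain ⟨T, hTs, hTcard, hT⟩ := exists_subset_forall_norm_sum_sub_le (s := range N)
    (p := t / N) (by positivity) (div_le_one_of_le₀ (by exact_mod_cast ht₂) (by positivity))
    (range N ×ˢ range (M * N)) (g := fun q y => gridPhase M N q.2 ((q.1 + y) % N))
    (fun _ _ => (norm_gridPhase _ _ _ _).le) (θ := η / 5) (σ := 2 / 5 * η * t)
    (by positivity) (by linarith) (failure_budget_lt_one hM hN hηt)
  rw [card_range, div_mul_cancel₀ _ (by positivity), abs_sub_comm] at hTcard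
  obtain ⟨B, hBs, hBcard, hBT⟩ :=
    exists_card_eq_and_subset_or_superset hTs (t := t) (by simpa using ht₂)
  refine ⟨B, hBs, hBcard, fun x hx k hk => ?_⟩
  rw [expSum_image_translate hM hN hBs, expSum_range_image hM hN x]
  have hBT' := norm_sum_sub_sum_le_of_subset_or_superset
    (fun y => (norm_gridPhase M N k ((x + y) % N)).le) hBT
  rw [hBcard] at hBT'
  have hT' := hT (x, k) (mem_product.mpr ⟨hx, mem_range.mpr hk⟩)
  have hηt_pos : (0 : ℝ) < η * t := by positivity
  calc _ ≤ (2 / 5 * η * t + √2 * (2 / 5 * η * t)) / t :=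
        (norm_div_sub_div_le _ _ _ ht₁ hN).trans (by gcongr; linarith)
    _ ≤ η := by
        rw [div_le_iff₀ (by positivity)]
        nlinarith [sqrt_two_lt_three_halves]
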